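/- The multivariate Beta function satisfies B(a₁,…,a_{n+1}) := ∫_{Bₙ} x₁^{a₁−1} ⋯ xₙ^{aₙ−1} (1−Σᵢxᵢ)^{a_{n+1}−1} dx₁⋯dxₙ = ∏ᵢ₌₁^{n+1} Γ(aᵢ) / Γ(Σᵢ₌₁^{n+1} aᵢ), for all a₁,…,a_{n+1} > 0. -/

import Mathlib

/-!
Let the exponents be `a` on the coordinates and `s` on `1 - Σ x`, and peel off the first
coordinate. For fixed `y = (x₁, …, xₙ)` in the simplex, the integral over `x₀ ∈ (0, c)`,
`c = 1 - Σ y`, of `x₀^(a₀-1) (c - x₀)^(s-1)` is the scaled Beta integral `c^(a₀+s-1) B(a₀, s)`.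
So Tonelli turns the `(n+1)`-dimensional integral with exponents `(a₀, a; s)` into `B(a₀, s)`
times the `n`-dimensional one with exponents `(a; a₀ + s)`, and the Gamma factors telescope
along the induction.
-/

open MeasureTheory Set
open scoped ENNReal

lemma ofReal_rpow_mul_sub_rpow {x c : ℝ} (hx : 0 ≤ x) (hxc : x ≤ c) (p q : ℝ) :
    ((x ^ (p - 1) * (c - x) ^ (q - 1) : ℝ) : ℂ) =
      (x : ℂ) ^ ((p : ℂ) - 1) * ((c : ℂ) - x) ^ ((q : ℂ) - 1) := by
  rw [Complex.ofReal_mul, Complex.ofReal_cpow hx, Complex.ofReal_cpow (sub_nonneg.2 hxc)]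
  push_cast
  rfl

lemma integral_rpow_mul_sub_rpow {p q c : ℝ} (hp : 0 < p) (hq : 0 < q) (hc : 0 < c) :
    ∫ t in 0..c, t ^ (p - 1) * (c - t) ^ (q - 1) =
      c ^ (p + q - 1) * (Real.Gamma p * Real.Gamma q / Real.Gamma (p + q)) := by
  apply Complex.ofReal_injective
  rw [← intervalIntegral.integral_ofReal, intervalIntegral.integral_congr fun t ht =>
      ofReal_rpow_mul_sub_rpow (uIcc_of_le hc.le ▸ ht).1 (uIcc_of_le hc.le ▸ ht).2 p q,
    Complex.betaIntegral_scaled _ _ hc,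
    Complex.betaIntegral_eq_Gamma_mul_div _ _ (by simpa using hp) (by simpa using hq)]
  push_cast [Complex.ofReal_cpow hc.le, ← Complex.Gamma_ofReal]
  rfl

lemma lintegral_Ioo_rpow_mul_sub_rpow {p q c : ℝ} (hp : 0 < p) (hq : 0 < q) (hc : 0 < c) :
    ∫⁻ t in Ioo 0 c, ENNReal.ofReal (t ^ (p - 1) * (c - t) ^ (q - 1)) =
      ENNReal.ofReal (c ^ (p + q - 1) * (Real.Gamma p * Real.Gamma q / Real.Gamma (p + q))) := by
  have h := integral_rpow_mul_sub_rpow hp hq hc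
  have hpos : 0 < c ^ (p + q - 1) * (Real.Gamma p * Real.Gamma q / Real.Gamma (p + q)) := by
    positivity
  -- the interval integral is nonzero, hence not the junk value of a non-integrable function
  have hint := (intervalIntegrable_iff_integrableOn_Ioc_of_le hc.le).1
    (intervalIntegral.intervalIntegrable_of_integral_ne_zero (h ▸ hpos.ne'))
  rw [intervalIntegral.integral_of_le hc.le] at h
  rw [setLIntegral_congr Ioo_ae_eq_Ioc, ← h, ofReal_integral_eq_lintegral_ofReal hint]
  filter_upwards [ae_restrict_mem measurableSet_Ioc] with t ht
  have := sub_nonneg.2 ht.2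
  have := ht.1.le
  positivity

theorem lintegral_pi_fin_succ {α : Type*} [MeasurableSpace α] (μ : Measure α) [SigmaFinite μ]
    {n : ℕ} {f : (Fin (n + 1) → α) → ℝ≥0∞} (hf : Measurable f) :
    ∫⁻ x, f x ∂Measure.pi (fun _ => μ) =
      ∫⁻ y, ∫⁻ t, f (Fin.cons t y) ∂μ ∂Measure.pi (fun _ => μ) := by
  have e := (measurePreserving_piFinSuccAbove (fun (_ : Fin (n + 1)) => μ) 0).symm
  rw [← e.lintegral_comp hf]
  refine (lintegral_prod_symm _ (hf.comp e.measurable).aemeasurable).trans ?_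
  simp [MeasurableEquiv.piFinSuccAbove_symm_apply, Fin.insertNthEquiv, Fin.insertNth_zero']

def openSimplex (n : ℕ) : Set (Fin n → ℝ) :=
  {x | (∀ i, x i ∈ Ioo (0 : ℝ) 1) ∧ ∑ i, x i < 1}

noncomputable def dirichletDensity {n : ℕ} (a : Fin n → ℝ) (s : ℝ) (x : Fin n → ℝ) : ℝ :=
  (∏ i, x i ^ (a i - 1)) * (1 - ∑ i, x i) ^ (s - 1)

lemma measurableSet_openSimplex (n : ℕ) : MeasurableSet (openSimplex n) := by
  unfold openSimplex
  measurability

lemma measurable_dirichletDensity {n : ℕ} (a : Fin n → ℝ) (s : ℝ) :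
    Measurable (dirichletDensity a s) := by
  unfold dirichletDensity
  fun_prop

lemma dirichletDensity_nonneg {n : ℕ} (a : Fin n → ℝ) (s : ℝ) {x : Fin n → ℝ}
    (hx : x ∈ openSimplex n) : 0 ≤ dirichletDensity a s x :=
  mul_nonneg (Finset.prod_nonneg fun i _ => Real.rpow_nonneg (hx.1 i).1.le _)
    (Real.rpow_nonneg (sub_nonneg.2 hx.2.le) _)

lemma cons_mem_openSimplex_iff {n : ℕ} {t : ℝ} {y : Fin n → ℝ} :
    (Fin.cons t y : Fin (n + 1) → ℝ) ∈ openSimplex (n + 1) ↔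
      y ∈ openSimplex n ∧ t ∈ Ioo 0 (1 - ∑ i, y i) := by
  simp only [openSimplex, mem_ofPred_eq, Fin.forall_fin_succ, Fin.sum_univ_succ, Fin.cons_zero,
    Fin.cons_succ, mem_Ioo]
  constructor
  · rintro ⟨⟨⟨ht, -⟩, hy⟩, hsum⟩
    have : 0 ≤ ∑ i, y i := Finset.sum_nonneg fun i _ => (hy i).1.le
    exact ⟨⟨hy, by linarith⟩, ht, by linarith⟩
  · rintro ⟨⟨hy, -⟩, ht, hsum⟩
    have : 0 ≤ ∑ i, y i := Finset.sum_nonneg fun i _ => (hy i).1.le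
    exact ⟨⟨⟨ht, by linarith⟩, hy⟩, by linarith⟩

lemma dirichletDensity_cons {n : ℕ} (a₀ : ℝ) (a : Fin n → ℝ) (s t : ℝ) (y : Fin n → ℝ) :
    dirichletDensity (Fin.cons a₀ a) s (Fin.cons t y) =
      (t ^ (a₀ - 1) * ((1 - ∑ i, y i) - t) ^ (s - 1)) * ∏ i, y i ^ (a i - 1) := by
  simp only [dirichletDensity, Fin.prod_univ_succ, Fin.sum_univ_succ, Fin.cons_zero, Fin.cons_succ,
    sub_add_eq_sub_sub_swap]
  ring

lemma lintegral_cons_indicator_dirichletDensity {n : ℕ} {a₀ s : ℝ} (ha₀ : 0 < a₀) (hs : 0 < s)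
    (a : Fin n → ℝ) (y : Fin n → ℝ) :
    ∫⁻ t, (openSimplex (n + 1)).indicator
        (fun x => ENNReal.ofReal (dirichletDensity (Fin.cons a₀ a) s x)) (Fin.cons t y) =
      (openSimplex n).indicator (fun y => ENNReal.ofReal
        (Real.Gamma a₀ * Real.Gamma s / Real.Gamma (a₀ + s)) *
          ENNReal.ofReal (dirichletDensity a (a₀ + s) y)) y := by
  by_cases hy : y ∈ openSimplex n
  · have hc : 0 < 1 - ∑ i, y i := sub_pos.2 hy.2
    have hP : 0 ≤ ∏ i, y i ^ (a i - 1) :=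
      Finset.prod_nonneg fun i _ => Real.rpow_nonneg (hy.1 i).1.le _
    have hslice : (fun t => (openSimplex (n + 1)).indicator
        (fun x => ENNReal.ofReal (dirichletDensity (Fin.cons a₀ a) s x)) (Fin.cons t y)) =
        (Ioo 0 (1 - ∑ i, y i)).indicator
          (fun t => ENNReal.ofReal (dirichletDensity (Fin.cons a₀ a) s (Fin.cons t y))) := by
      ext t
      simp only [indicator, cons_mem_openSimplex_iff, hy, true_and]
    simp only [indicator_of_mem hy]
    rw [hslice, lintegral_indicator measurableSet_Ioo]
    simp only [dirichletDensity_cons, ENNReal.ofReal_mul' hP]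
    rw [lintegral_mul_const _ (by fun_prop), lintegral_Ioo_rpow_mul_sub_rpow ha₀ hs hc,
      ← ENNReal.ofReal_mul' hP, ← ENNReal.ofReal_mul (by positivity), dirichletDensity]
    congr 1
    ring
  · simp [indicator, cons_mem_openSimplex_iff, hy]

theorem lintegral_openSimplex_dirichletDensity {n : ℕ} {a : Fin n → ℝ} {s : ℝ}
    (ha : ∀ i, 0 < a i) (hs : 0 < s) :
    ∫⁻ x in openSimplex n, ENNReal.ofReal (dirichletDensity a s x) =
      ENNReal.ofReal ((∏ i, Real.Gamma (a i)) * Real.Gamma s / Real.Gamma (∑ i, a i + s)) := by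
  induction n generalizing s with
  | zero =>
    have : openSimplex 0 = univ := by ext x; simp [openSimplex]
    simp [this, dirichletDensity, volume_pi, div_self (Real.Gamma_pos_of_pos hs).ne']
  | succ n ih =>
    obtain ⟨a₀, a, rfl⟩ : ∃ a₀ a', a = Fin.cons a₀ a' := ⟨_, _, (Fin.cons_self_tail a).symm⟩
    have ha₀ : 0 < a₀ := ha 0
    have ha' : ∀ i, 0 < a i := fun i => ha i.succ
    calc ∫⁻ x in openSimplex (n + 1), ENNReal.ofReal (dirichletDensity (Fin.cons a₀ a) s x)
        = ∫⁻ y, (openSimplex n).indicator (fun y => ENNReal.ofReal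
            (Real.Gamma a₀ * Real.Gamma s / Real.Gamma (a₀ + s)) *
              ENNReal.ofReal (dirichletDensity a (a₀ + s) y)) y := by
          rw [← lintegral_indicator (measurableSet_openSimplex _), volume_pi,
            lintegral_pi_fin_succ _ ((measurable_dirichletDensity _ _).ennreal_ofReal.indicator
              (measurableSet_openSimplex _))]
          simp only [lintegral_cons_indicator_dirichletDensity ha₀ hs, volume_pi]
      _ = ENNReal.ofReal (Real.Gamma a₀ * Real.Gamma s / Real.Gamma (a₀ + s)) *
            ENNReal.ofReal ((∏ i, Real.Gamma (a i)) * Real.Gamma (a₀ + s) /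
              Real.Gamma (∑ i, a i + (a₀ + s))) := by
          rw [lintegral_indicator (measurableSet_openSimplex _),
            lintegral_const_mul _ (measurable_dirichletDensity _ _).ennreal_ofReal,
            ih ha' (add_pos ha₀ hs)]
      _ = _ := by
          have hΓ : Real.Gamma (a₀ + s) ≠ 0 := (Real.Gamma_pos_of_pos (add_pos ha₀ hs)).ne'
          rw [← ENNReal.ofReal_mul (by positivity), Fin.prod_univ_succ, Fin.sum_univ_succ]
          simp only [Fin.cons_zero, Fin.cons_succ]
          rw [add_assoc, add_left_comm]
          field_simp

theorem integral_openSimplex_dirichletDensity {n : ℕ} {a : Fin n → ℝ} {s : ℝ}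
    (ha : ∀ i, 0 < a i) (hs : 0 < s) :
    ∫ x in openSimplex n, dirichletDensity a s x =
      (∏ i, Real.Gamma (a i)) * Real.Gamma s / Real.Gamma (∑ i, a i + s) := by
  rw [integral_eq_lintegral_of_nonneg_ae
      (ae_restrict_of_forall_mem (measurableSet_openSimplex n) fun _ =>
        dirichletDensity_nonneg a s)
      (measurable_dirichletDensity a s).aestronglyMeasurable,
    lintegral_openSimplex_dirichletDensity ha hs, ENNReal.toReal_ofReal]
  have := Finset.prod_pos fun i (_ : i ∈ Finset.univ) => Real.Gamma_pos_of_pos (ha i)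
  exact div_nonneg (by positivity)
    (Real.Gamma_nonneg_of_nonneg (add_nonneg (Finset.sum_nonneg fun i _ => (ha i).le) hs.le))

/-- The multivariate Beta function:
`∫_{Bₙ} x₁^{a₁−1}⋯xₙ^{aₙ−1}(1−Σxᵢ)^{a_{n+1}−1} dx = ∏ᵢ Γ(aᵢ)/Γ(Σᵢ aᵢ)`
for all `a₁,…,a_{n+1} > 0`, where `Bₙ = {x ∈ (0,1)ⁿ : Σ xᵢ < 1}` is the open standard
simplex and `Γ` is the Euler Gamma function. -/
theorem stmt19 (n : ℕ) (a : Fin (n+1) → ℝ) (ha : ∀ i, 0 < a i) :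
    ∫ x in {x : Fin n → ℝ | (∀ i, x i ∈ Set.Ioo (0:ℝ) 1) ∧ ∑ i, x i < 1},
        (∏ i : Fin n, x i ^ (a (Fin.castSucc i) - 1)) *
          (1 - ∑ i, x i) ^ (a (Fin.last n) - 1) ∂volume =
      (∏ i, Real.Gamma (a i)) / Real.Gamma (∑ i, a i) := by
  rw [Fin.prod_univ_castSucc, Fin.sum_univ_castSucc]
  exact integral_openSimplex_dirichletDensity (fun i => ha (Fin.castSucc i)) (ha (Fin.last n))
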